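/- arXiv:1808.03116 — 2 statements merged into one kernel-verified Lean document; each statement's English description precedes it below -/
import Mathlib

section
/- There is no Lie algebroid bracket on E₀ corresponding to the anchor ρ. Precisely: there exists no ℝ-bilinear, skew-symmetric map L : Γ(E₀) × Γ(E₀) → Γ(E₀) on the module of sections of E₀ that simultaneously satisfies (i) the Leibniz rule L(X, f·Y) = ρ(X)(f)·Y + f·L(X,Y) for all sections X, Y and f ∈ C^∞(ℝ²), (ii) anchor compatibility ρ(L(X,Y)) = [ρ(X), ρ(Y)] (Lie bracket of vector fields on ℝ²), and (iii) the Jacobi identity L(X, L(Y,Z)) + L(Y, L(Z,X)) + L(Z, L(X,Y)) = 0. -/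
/-!
Evaluate the (1,1) entry of the Jacobi identity for `X₁¹, X₂¹, X₁²` with the functional
`f ↦ ∂₁²f(0)`. Anchor compatibility fixes each column of a bracket of generators up to the kernel
of `(k₁, k₂) ↦ (x¹)²k₁ + (x²)²k₂`, and applying `∂_m` twice to `(x¹)²k₁ + (x²)²k₂ = 0` shows that
the kernel vanishes to second order at the origin. By the Leibniz rule, `∂₁²(0)` of the Jacobi
sum only involves values and first derivatives at the origin of brackets of generators, so it
may be computed with `[X_j^i, X_l^k] = 2x^k δ_j^k X_l^i − 2x^i δ_l^i X_j^k` instead; it is `-4`.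
-/

noncomputable section

set_option maxHeartbeats 1000000
set_option synthInstance.maxHeartbeats 400000

open Matrix

/-- The ℝ-algebra of smooth (C^∞) functions on ℝ². -/
def Sm : Subalgebra ℝ ((ℝ × ℝ) → ℝ) where
  carrier := {f | ContDiff ℝ (⊤ : ℕ∞) f}
  mul_mem' := fun {a b} (hf : ContDiff ℝ (⊤ : ℕ∞) a) (hg : ContDiff ℝ (⊤ : ℕ∞) b) => hf.mul hg
  add_mem' := fun {a b} (hf : ContDiff ℝ (⊤ : ℕ∞) a) (hg : ContDiff ℝ (⊤ : ℕ∞) b) => hf.add hg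
  algebraMap_mem' r :=
    show ContDiff ℝ (⊤ : ℕ∞) (algebraMap ℝ ((ℝ × ℝ) → ℝ) r) from contDiff_const

/-- Smooth functions on the plane. -/
abbrev S : Type := Sm

lemma mem_Sm_iff {f : (ℝ × ℝ) → ℝ} : f ∈ Sm ↔ ContDiff ℝ (⊤ : ℕ∞) f := by
  rw [Sm]; rfl

lemma smooth_coe (f : S) : ContDiff ℝ (⊤ : ℕ∞) (f : (ℝ × ℝ) → ℝ) := mem_Sm_iff.mp f.2

/-- Sections of the trivial bundle `ℝ² × M₂(ℝ)`, as 2×2 matrices of smooth functions. -/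
abbrev E₀ : Type := Matrix (Fin 2) (Fin 2) S

/-- The section `X_j^i`: the constant elementary matrix with 1 in entry (i,j). -/
def sb (i j : Fin 2) : E₀ := Matrix.single i j 1

/-- First coordinate function. -/
def x₁ : S := ⟨fun p => p.1, mem_Sm_iff.mpr contDiff_fst⟩
/-- Second coordinate function. -/
def x₂ : S := ⟨fun p => p.2, mem_Sm_iff.mpr contDiff_snd⟩
/-- Coordinates. -/
def xc : Fin 2 → S := ![x₁, x₂]

/-- Directional derivative of a smooth function, in direction `v`. -/
def pdAux (v : ℝ × ℝ) (f : S) : S :=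
  ⟨fun p => fderiv ℝ (f : (ℝ × ℝ) → ℝ) p v,
    mem_Sm_iff.mpr (((smooth_coe f).fderiv_right (le_refl _)).clm_apply contDiff_const)⟩

/-- The vector field (derivation) `∂/∂v` on `ℝ²`. -/
def pd (v : ℝ × ℝ) : Derivation ℝ S S where
  toFun := pdAux v
  map_add' f g := by
    ext p
    have hf : DifferentiableAt ℝ (f : (ℝ × ℝ) → ℝ) p :=
      ((smooth_coe f).differentiable (by simp)).differentiableAt
    have hg : DifferentiableAt ℝ (g : (ℝ × ℝ) → ℝ) p :=
      ((smooth_coe g).differentiable (by simp)).differentiableAt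
    have h1 : ((f + g : S) : (ℝ × ℝ) → ℝ) = fun q => (f : (ℝ × ℝ) → ℝ) q + (g : (ℝ × ℝ) → ℝ) q := rfl
    simp only [pdAux, h1, AddMemClass.coe_add, Pi.add_apply]
    rw [fderiv_fun_add hf hg]
    simp
  map_smul' c f := by
    ext p
    have h1 : ((c • f : S) : (ℝ × ℝ) → ℝ) = fun q => c * (f : (ℝ × ℝ) → ℝ) q := rfl
    have hf : DifferentiableAt ℝ (f : (ℝ × ℝ) → ℝ) p :=
      ((smooth_coe f).differentiable (by simp)).differentiableAt
    simp only [pdAux]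
    rw [h1, fderiv_const_mul hf]
    simp
  map_one_eq_zero' := by
    ext p
    have h1 : ((1 : S) : (ℝ × ℝ) → ℝ) = fun _ => (1 : ℝ) := rfl
    have h2 : fderiv ℝ (1 : (ℝ × ℝ) → ℝ) p = 0 := fderiv_const_apply 1
    simp [pdAux, h1, h2]
  leibniz' f g := by
    ext p
    have hf : DifferentiableAt ℝ (f : (ℝ × ℝ) → ℝ) p :=
      ((smooth_coe f).differentiable (by simp)).differentiableAt
    have hg : DifferentiableAt ℝ (g : (ℝ × ℝ) → ℝ) p :=
      ((smooth_coe g).differentiable (by simp)).differentiableAt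
    have h1 : ((f * g : S) : (ℝ × ℝ) → ℝ) = fun q => (f : (ℝ × ℝ) → ℝ) q * (g : (ℝ × ℝ) → ℝ) q := rfl
    simp [pdAux, h1, fderiv_fun_mul hf hg]
    try ring

/-- Standard basis vectors of ℝ². -/
def ev : Fin 2 → ℝ × ℝ := ![(1, 0), (0, 1)]

/-- The anchor `ρ` of `E₀`: `ρ(X_j^i) = (x^i)² ∂/∂x^j`, extended `C^∞(ℝ²)`-linearly. -/
def anchor (X : E₀) : Derivation ℝ S S :=
  ∑ i : Fin 2, ∑ j : Fin 2, (X i j * xc i ^ 2) • pd (ev j)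

/-- The section `𝒳₁ = (x²)² X₁¹ − (x¹)² X₁²`. -/
def 𝓧₁ : E₀ := x₂ ^ 2 • sb 0 0 - x₁ ^ 2 • sb 1 0
/-- The section `𝒳₂ = (x²)² X₂¹ − (x¹)² X₂²`. -/
def 𝓧₂ : E₀ := x₂ ^ 2 • sb 0 1 - x₁ ^ 2 • sb 1 1

/-- The almost Lie bracket axioms for `(E₀, ρ)`, together with the defining values
`[X_j^i, X_l^k] = 2x^k δ_j^k X_l^i − 2x^i δ_l^i X_j^k` on the generators: ℝ-bilinearity,
skew-symmetry, the Leibniz rule, and the values on generators. -/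
def IsBracket (L : E₀ → E₀ → E₀) : Prop :=
  (∀ X X' Y, L (X + X') Y = L X Y + L X' Y) ∧
  (∀ X Y Y', L X (Y + Y') = L X Y + L X Y') ∧
  (∀ (c : ℝ) (X Y : E₀), L (c • X) Y = c • L X Y) ∧
  (∀ (c : ℝ) (X Y : E₀), L X (c • Y) = c • L X Y) ∧
  (∀ X Y, L Y X = - L X Y) ∧
  (∀ (f : S) (X Y : E₀), L X (f • Y) = anchor X f • Y + f • L X Y) ∧
  (∀ i j k l, L (sb i j) (sb k l) =
    (if j = k then (2 : S) * xc k else 0) • sb i l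
      - (if l = i then (2 : S) * xc i else 0) • sb k j)


lemma Derivation.apply_apply_sq_mul_of_apply_eq_one {R A : Type*} [CommRing R] [CommRing A]
    [Algebra R A] (D : Derivation R A A) {x : A} (hx : D x = 1) (a : A) :
    D (D (x ^ 2 * a)) = 2 * a + 4 * x * D a + x ^ 2 * D (D a) := by
  simp only [sq, Derivation.leibniz, hx, smul_eq_mul, map_add, Derivation.map_one_eq_zero]
  ring

lemma Derivation.apply_sq_mul_of_apply_eq_zero {R A : Type*} [CommRing R] [CommRing A]
    [Algebra R A] (D : Derivation R A A) {y : A} (hy : D y = 0) (b : A) :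
    D (y ^ 2 * b) = y ^ 2 * D b := by
  simp [Derivation.leibniz, Derivation.leibniz_pow, hy]

def coordDeriv (j : Fin 2) : Derivation ℝ S S := pd (ev j)

def evalOrigin : S →ₐ[ℝ] ℝ := (Pi.evalAlgHom ℝ (fun _ => ℝ) (0, 0)).comp Sm.val

def derivAtOrigin (j : Fin 2) : S →ₗ[ℝ] ℝ :=
  evalOrigin.toLinearMap ∘ₗ (coordDeriv j : S →ₗ[ℝ] S)

def secondDerivAtOrigin : S →ₗ[ℝ] ℝ := derivAtOrigin 0 ∘ₗ (coordDeriv 0 : S →ₗ[ℝ] S)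

def VanishesToSecondOrder (f : S) : Prop :=
  evalOrigin f = 0 ∧ ∀ j, derivAtOrigin j f = 0

lemma derivAtOrigin_apply (j : Fin 2) (f : S) :
    derivAtOrigin j f = evalOrigin (coordDeriv j f) := rfl

lemma secondDerivAtOrigin_apply (f : S) :
    secondDerivAtOrigin f = evalOrigin (coordDeriv 0 (coordDeriv 0 f)) := rfl

lemma evalOrigin_two : evalOrigin (2 : S) = 2 := map_ofNat evalOrigin 2

lemma evalOrigin_xc (m : Fin 2) : evalOrigin (xc m) = 0 := by
  fin_cases m <;> rfl

lemma coordDeriv_xc (j m : Fin 2) : coordDeriv j (xc m) = if j = m then 1 else 0 := by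
  ext p
  have hfst : fderiv ℝ (fun q : ℝ × ℝ => q.1) p = ContinuousLinearMap.fst ℝ ℝ ℝ := fderiv_fst
  have hsnd : fderiv ℝ (fun q : ℝ × ℝ => q.2) p = ContinuousLinearMap.snd ℝ ℝ ℝ := fderiv_snd
  fin_cases j <;> fin_cases m <;> simp [coordDeriv, pd, pdAux, xc, x₁, x₂, ev, hfst, hsnd]

lemma coordDeriv_xc_sq (j k : Fin 2) :
    coordDeriv j (xc k ^ 2) = if j = k then 2 * xc k else 0 := by
  rw [Derivation.leibniz_pow, coordDeriv_xc]
  split_ifs <;> simp [two_mul]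

lemma coordDeriv_coordDeriv_xc_sq_mul (m i : Fin 2) (g : S) :
    coordDeriv m (coordDeriv m (xc i ^ 2 * g)) =
      (if m = i then 2 * g + 4 * xc i * coordDeriv m g else 0)
        + xc i ^ 2 * coordDeriv m (coordDeriv m g) := by
  by_cases hi : m = i
  · subst hi
    rw [if_pos rfl, Derivation.apply_apply_sq_mul_of_apply_eq_one _ (by simp [coordDeriv_xc])]
  · have h0 : coordDeriv m (xc i) = 0 := by simp [coordDeriv_xc, hi]
    rw [if_neg hi, Derivation.apply_sq_mul_of_apply_eq_zero _ h0,
      Derivation.apply_sq_mul_of_apply_eq_zero _ h0, zero_add]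

lemma derivAtOrigin_mul (j : Fin 2) (f g : S) :
    derivAtOrigin j (f * g) =
      evalOrigin f * derivAtOrigin j g + evalOrigin g * derivAtOrigin j f := by
  simp [derivAtOrigin_apply, Derivation.leibniz]

lemma derivAtOrigin_xc (j m : Fin 2) : derivAtOrigin j (xc m) = if j = m then 1 else 0 := by
  rw [derivAtOrigin_apply, coordDeriv_xc]
  split_ifs <;> simp

lemma derivAtOrigin_xc_mul (j m : Fin 2) (g : S) :
    derivAtOrigin j (xc m * g) = if j = m then evalOrigin g else 0 := by
  simp [derivAtOrigin_mul, evalOrigin_xc, derivAtOrigin_xc]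

lemma derivAtOrigin_xc_sq_mul (j m : Fin 2) (g : S) : derivAtOrigin j (xc m ^ 2 * g) = 0 := by
  simp [derivAtOrigin_mul, evalOrigin_xc, sq, mul_assoc]

lemma derivAtOrigin_two_mul_xc (j k : Fin 2) :
    derivAtOrigin j (2 * xc k) = if j = k then 2 else 0 := by
  simp [derivAtOrigin_mul, evalOrigin_xc, derivAtOrigin_xc, evalOrigin_two]

lemma secondDerivAtOrigin_mul_of_evalOrigin_eq_zero {f g : S} (hf : evalOrigin f = 0)
    (hg : evalOrigin g = 0) :
    secondDerivAtOrigin (f * g) = 2 * derivAtOrigin 0 f * derivAtOrigin 0 g := by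
  simp only [secondDerivAtOrigin_apply, Derivation.leibniz, map_add, smul_eq_mul, map_mul, hf, hg]
  rw [derivAtOrigin_apply, derivAtOrigin_apply]
  ring

lemma secondDerivAtOrigin_xc_sq_mul (m : Fin 2) (g : S) :
    secondDerivAtOrigin (xc m ^ 2 * g) = if m = 0 then 2 * evalOrigin g else 0 := by
  rw [secondDerivAtOrigin_apply, coordDeriv_coordDeriv_xc_sq_mul]
  by_cases hm : m = 0 <;> simp [hm, evalOrigin_xc, evalOrigin_two, eq_comm]

lemma vanishesToSecondOrder_of_sum_sq_mul_eq_zero (k : Fin 2 → S)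
    (h : ∑ i, xc i ^ 2 * k i = 0) (m : Fin 2) : VanishesToSecondOrder (k m) := by
  set D := coordDeriv m
  have hD : (2 : ℝ) • k m + xc m * ((4 : ℝ) • D (k m)) + ∑ i, xc i ^ 2 * D (D (k i)) = 0 := by
    have := congrArg (fun f => D (D f)) h
    simp only [map_sum, map_zero, D, coordDeriv_coordDeriv_xc_sq_mul, Finset.sum_add_distrib,
      Finset.sum_ite_eq, Finset.mem_univ, if_true] at this
    rw [← this]
    simp only [Algebra.smul_def, map_ofNat]
    ring
  have hval := congrArg evalOrigin hD
  have hder := fun j => congrArg (derivAtOrigin j) hD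
  simp only [map_add, map_smul, map_mul, map_sum, map_zero, map_pow, evalOrigin_xc,
    derivAtOrigin_xc_sq_mul, derivAtOrigin_xc_mul, smul_eq_mul, ne_eq, OfNat.ofNat_ne_zero,
    not_false_eq_true, zero_pow, zero_mul, Finset.sum_const_zero, add_zero] at hval hder
  have hm : derivAtOrigin m (k m) = 0 := by
    have := hder m
    rw [if_pos rfl] at this
    change 2 * derivAtOrigin m (k m) + 4 * derivAtOrigin m (k m) = 0 at this
    linarith
  refine ⟨by linarith, fun j => ?_⟩
  have := hder j
  change (2 * derivAtOrigin j (k m) + if j = m then 4 * derivAtOrigin m (k m) else 0) = 0 at this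
  rw [hm, mul_zero, ite_self, add_zero] at this
  linarith

lemma VanishesToSecondOrder.evalOrigin_eq {f g : S} (h : VanishesToSecondOrder (f - g)) :
    evalOrigin f = evalOrigin g :=
  sub_eq_zero.mp ((map_sub evalOrigin f g).symm.trans h.1)

lemma VanishesToSecondOrder.derivAtOrigin_eq {f g : S} (h : VanishesToSecondOrder (f - g))
    (j : Fin 2) : derivAtOrigin j f = derivAtOrigin j g :=
  sub_eq_zero.mp ((map_sub (derivAtOrigin j) f g).symm.trans (h.2 j))

lemma sb_apply (i j a b : Fin 2) : sb i j a b = if i = a ∧ j = b then 1 else 0 :=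
  Matrix.single_apply _ _ _ _ _

lemma anchor_apply (X : E₀) (f : S) :
    anchor X f = ∑ i, ∑ j, X i j * xc i ^ 2 * coordDeriv j f := by
  simp only [anchor, ← Derivation.coeFnAddMonoidHom_apply, map_sum]
  simp [Derivation.coeFnAddMonoidHom_apply, coordDeriv, Finset.sum_apply, smul_eq_mul]

lemma anchor_apply_xc (X : E₀) (m : Fin 2) : anchor X (xc m) = ∑ i, xc i ^ 2 * X i m := by
  simp [anchor_apply, coordDeriv_xc, mul_comm]

lemma anchor_sb (i j : Fin 2) (f : S) : anchor (sb i j) f = xc i ^ 2 * coordDeriv j f := by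
  simp only [anchor_apply, sb_apply, ite_and, ite_mul, one_mul, zero_mul]
  simp

lemma vanishesToSecondOrder_sub_of_anchor_apply_xc_eq {V V' : E₀}
    (h : ∀ m, anchor V (xc m) = anchor V' (xc m)) (a b : Fin 2) :
    VanishesToSecondOrder (V a b - V' a b) := by
  refine vanishesToSecondOrder_of_sum_sq_mul_eq_zero (fun i => V i b - V' i b) ?_ a
  simp only [mul_sub, Finset.sum_sub_distrib, ← anchor_apply_xc, h, sub_self]

def stdBracket (i j k l : Fin 2) : E₀ :=
  (if j = k then (2 : S) * xc k else 0) • sb i l - (if l = i then (2 : S) * xc i else 0) • sb k j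

lemma anchor_stdBracket_apply_xc (i j k l m : Fin 2) :
    anchor (stdBracket i j k l) (xc m) = ⁅anchor (sb i j), anchor (sb k l)⁆ (xc m) := by
  rw [Derivation.commutator_apply, anchor_apply_xc, anchor_sb, anchor_sb, anchor_sb, anchor_sb,
    coordDeriv_xc, coordDeriv_xc]
  simp only [stdBracket, sb_apply, Matrix.sub_apply, Matrix.smul_apply, smul_eq_mul, mul_sub,
    Finset.sum_sub_distrib, mul_ite, mul_one, mul_zero, ite_and, apply_ite (coordDeriv _), map_zero,
    coordDeriv_xc_sq]
  split_ifs <;> subst_vars <;> simp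

lemma evalOrigin_stdBracket (i j k l a b : Fin 2) : evalOrigin (stdBracket i j k l a b) = 0 := by
  simp only [stdBracket, Matrix.sub_apply, Matrix.smul_apply, smul_eq_mul, map_sub, map_mul,
    apply_ite evalOrigin, map_zero, evalOrigin_xc, mul_zero, zero_mul, ite_self, sub_zero]

lemma vanishesToSecondOrder_bracket_sb_sub_stdBracket {L : E₀ → E₀ → E₀}
    (hanch : ∀ X Y, anchor (L X Y) = ⁅anchor X, anchor Y⁆) (i j k l a b : Fin 2) :
    VanishesToSecondOrder (L (sb i j) (sb k l) a b - stdBracket i j k l a b) :=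
  vanishesToSecondOrder_sub_of_anchor_apply_xc_eq
    (fun m => by rw [hanch, anchor_stdBracket_apply_xc]) a b

lemma bracket_apply_eq_sum {L : E₀ → E₀ → E₀}
    (hadd : ∀ X Y Y', L X (Y + Y') = L X Y + L X Y')
    (hleib : ∀ (f : S) (X Y : E₀), L X (f • Y) = anchor X f • Y + f • L X Y)
    (X W : E₀) (c d : Fin 2) :
    L X W c d = anchor X (W c d) + ∑ a, ∑ b, W a b * L X (sb a b) c d := by
  let LX : E₀ →+ E₀ := AddMonoidHom.mk' (L X) (hadd X)
  have hW : W = ∑ a, ∑ b, W a b • sb a b := by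
    simpa [sb, Matrix.smul_single] using W.matrix_eq_sum_single
  have hLW : L X W = ∑ a, ∑ b, (anchor X (W a b) • sb a b + W a b • L X (sb a b)) := by
    simp only [← hleib]
    conv_lhs => rw [hW]
    exact (map_sum LX _ _).trans (Finset.sum_congr rfl fun a _ => map_sum LX _ _)
  rw [hLW]
  simp only [Matrix.sum_apply, Matrix.add_apply, Matrix.smul_apply, Finset.sum_add_distrib,
    sb_apply, smul_eq_mul, mul_ite, mul_one, mul_zero, ite_and, Finset.sum_ite_irrel,
    Finset.sum_const_zero, Finset.sum_ite_eq', Finset.mem_univ, if_true]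

lemma secondDerivAtOrigin_bracket_sb_bracket_sb {L : E₀ → E₀ → E₀}
    (hadd : ∀ X Y Y', L X (Y + Y') = L X Y + L X Y')
    (hleib : ∀ (f : S) (X Y : E₀), L X (f • Y) = anchor X f • Y + f • L X Y)
    (hanch : ∀ X Y, anchor (L X Y) = ⁅anchor X, anchor Y⁆) (i j k l p q c d : Fin 2) :
    secondDerivAtOrigin (L (sb i j) (L (sb k l) (sb p q)) c d) =
      (if i = 0 then 2 * derivAtOrigin j (stdBracket k l p q c d) else 0) +
        2 * ∑ a, ∑ b, derivAtOrigin 0 (stdBracket k l p q a b) *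
          derivAtOrigin 0 (stdBracket i j a b c d) := by
  have hval := fun i j k l a b =>
    (vanishesToSecondOrder_bracket_sb_sub_stdBracket hanch i j k l a b).evalOrigin_eq.trans
      (evalOrigin_stdBracket i j k l a b)
  have hderiv := fun i j k l a b =>
    (vanishesToSecondOrder_bracket_sb_sub_stdBracket hanch i j k l a b).derivAtOrigin_eq
  rw [bracket_apply_eq_sum hadd hleib, anchor_sb, map_add, secondDerivAtOrigin_xc_sq_mul]
  simp only [map_sum, Finset.mul_sum, mul_assoc, ← derivAtOrigin_apply, hderiv,
    secondDerivAtOrigin_mul_of_evalOrigin_eq_zero (hval _ _ _ _ _ _) (hval _ _ _ _ _ _)]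

/-- there is no Lie algebroid bracket on `E₀` corresponding to the anchor `ρ`:
no ℝ-bilinear skew-symmetric map on sections satisfying the Leibniz rule, anchor
compatibility and the Jacobi identity. -/
theorem statement5 :
    ¬ ∃ L : E₀ → E₀ → E₀,
      (∀ X X' Y, L (X + X') Y = L X Y + L X' Y) ∧
      (∀ X Y Y', L X (Y + Y') = L X Y + L X Y') ∧
      (∀ (c : ℝ) (X Y : E₀), L (c • X) Y = c • L X Y) ∧
      (∀ (c : ℝ) (X Y : E₀), L X (c • Y) = c • L X Y) ∧
      (∀ X Y, L Y X = - L X Y) ∧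
      (∀ (f : S) (X Y : E₀), L X (f • Y) = anchor X f • Y + f • L X Y) ∧
      (∀ X Y, anchor (L X Y) = ⁅anchor X, anchor Y⁆) ∧
      (∀ X Y Z, L X (L Y Z) + L Y (L Z X) + L Z (L X Y) = 0) := by
  rintro ⟨L, -, hadd, -, -, -, hleib, hanch, hjac⟩
  have h := congrArg (fun M : E₀ => secondDerivAtOrigin (M 1 1))
    (hjac (sb 0 0) (sb 0 1) (sb 1 0))
  simp only [Matrix.add_apply, Matrix.zero_apply, map_add, map_zero,
    secondDerivAtOrigin_bracket_sb_bracket_sb hadd hleib hanch] at h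
  simp [Fin.sum_univ_two, stdBracket, sb_apply, derivAtOrigin_two_mul_xc] at h
end
end

section
/- Let 𝒜 = X₁¹ + X₁² and ℬ = X₂¹ + X₂² be sections of E₀. Then the C^∞(ℝ²)-submodule E₀'' of Γ(E₀) generated by 𝒜 and ℬ is closed under the bracket [·,·]_{E₀} (indeed [𝒜, ℬ]_{E₀} = 2x¹ℬ − 2x²𝒜), and the Jacobiator of [·,·]_{E₀} vanishes on every triple of sections belonging to E₀''; i.e., the restricted bracket gives E₀'' a Lie algebroid (Lie–Rinehart) structure. -/
noncomputable section

set_option maxHeartbeats 1000000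
set_option synthInstance.maxHeartbeats 400000

open Matrix

/-- The Jacobiator of a bracket. -/
def Jac (L : E₀ → E₀ → E₀) (X Y Z : E₀) : E₀ := L X (L Y Z) + L Y (L Z X) + L Z (L X Y)

/-- The section `𝒜 = X₁¹ + X₁²`. -/
def 𝓐 : E₀ := sb 0 0 + sb 1 0
/-- The section `ℬ = X₂¹ + X₂²`. -/
def 𝓑 : E₀ := sb 0 1 + sb 1 1

/-!
Both the anchor defect `ρ[X, Y] - [ρX, ρY]` and, once that defect vanishes, the Jacobiator are
`C^∞(ℝ²)`-multilinear, and a bracket satisfying the Leibniz rule maps a span into itself as soon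
as it maps its generators into it. So everything reduces to the generators `𝒜, ℬ`: the bracket
`[𝒜, ℬ] = 2x¹ℬ − 2x²𝒜` lies in the span, `ρ𝒜 = |x|² ∂₁` and `ρℬ = |x|² ∂₂` satisfy
`[ρ𝒜, ρℬ] = 2x¹ρℬ − 2x²ρ𝒜` because partial derivatives commute, and a Jacobiator of three
generators out of two repeats an argument, hence vanishes by skew-symmetry.
-/

open Submodule

section AnchoredSkewBracket

variable {R A M : Type*} [CommRing R] [CommRing A] [Algebra R A] [AddCommGroup M] [Module A M]

theorem Derivation.smul_lie (f : A) (D₁ D₂ : Derivation R A A) :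
    ⁅f • D₁, D₂⁆ = f • ⁅D₁, D₂⁆ - D₂ f • D₁ := by
  ext a
  simp only [Derivation.commutator_apply, Derivation.sub_apply, Derivation.smul_apply,
    smul_eq_mul, Derivation.leibniz]
  ring

structure IsAnchoredSkewBracket (ρ : M →ₗ[A] Derivation R A A) (L : M → M → M) : Prop where
  add_left : ∀ X X' Y, L (X + X') Y = L X Y + L X' Y
  skew : ∀ X Y, L Y X = -L X Y
  leibniz : ∀ (f : A) X Y, L X (f • Y) = ρ X f • Y + f • L X Y

-- `Jac` is `jacobiator` specialised to `M = E₀`.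
def jacobiator (L : M → M → M) (X Y Z : M) : M := L X (L Y Z) + L Y (L Z X) + L Z (L X Y)

def anchorDefect (ρ : M →ₗ[A] Derivation R A A) (L : M → M → M) (X Y : M) :
    Derivation R A A :=
  ρ (L X Y) - ⁅ρ X, ρ Y⁆

variable {ρ : M →ₗ[A] Derivation R A A} {L : M → M → M}

theorem jacobiator_cycle (X Y Z : M) : jacobiator L X Y Z = jacobiator L Y Z X := by
  simp only [jacobiator]
  abel

theorem anchorDefect_self {X : M} (hX : L X X = 0) : anchorDefect ρ L X X = 0 := by
  rw [anchorDefect, hX, map_zero, lie_self, sub_zero]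

namespace IsAnchoredSkewBracket

theorem add_right (hL : IsAnchoredSkewBracket ρ L) (X Y Y' : M) :
    L X (Y + Y') = L X Y + L X Y' := by
  rw [hL.skew, hL.add_left, neg_add, ← hL.skew, ← hL.skew]

theorem zero_left (hL : IsAnchoredSkewBracket ρ L) (Y : M) : L 0 Y = 0 := by
  simpa using hL.add_left 0 0 Y

theorem zero_right (hL : IsAnchoredSkewBracket ρ L) (X : M) : L X 0 = 0 := by
  rw [hL.skew, hL.zero_left, neg_zero]

theorem neg_right (hL : IsAnchoredSkewBracket ρ L) (X Y : M) : L X (-Y) = -L X Y :=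
  eq_neg_of_add_eq_zero_left (by rw [← hL.add_right, neg_add_cancel, hL.zero_right])

theorem smul_left (hL : IsAnchoredSkewBracket ρ L) (f : A) (X Y : M) :
    L (f • X) Y = f • L X Y - ρ Y f • X := by
  rw [hL.skew Y (f • X), hL.leibniz, hL.skew X Y]
  module

theorem apply_mem_span_of_forall_left (hL : IsAnchoredSkewBracket ρ L) {s : Set M} {Y : M}
    (hY : ∀ a ∈ s, L a Y ∈ span A s) {X : M} (hX : X ∈ span A s) : L X Y ∈ span A s := by
  induction hX using Submodule.span_induction with
  | mem a ha => exact hY a ha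
  | zero => rw [hL.zero_left]; exact zero_mem _
  | add X X' _ _ hX hX' => rw [hL.add_left]; exact add_mem hX hX'
  | smul f X hXs hX => rw [hL.smul_left]; exact sub_mem (smul_mem _ _ hX) (smul_mem _ _ hXs)

theorem apply_mem_span (hL : IsAnchoredSkewBracket ρ L) {s : Set M}
    (hs : ∀ a ∈ s, ∀ b ∈ s, L a b ∈ span A s) {X Y : M} (hX : X ∈ span A s)
    (hY : Y ∈ span A s) : L X Y ∈ span A s := by
  refine hL.apply_mem_span_of_forall_left (fun a ha => ?_) hX
  rw [← neg_mem_iff, ← hL.skew]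
  exact hL.apply_mem_span_of_forall_left (fun b hb => hs b hb a ha) hY

theorem anchorDefect_swap (hL : IsAnchoredSkewBracket ρ L) (X Y : M) :
    anchorDefect ρ L Y X = -anchorDefect ρ L X Y := by
  rw [anchorDefect, anchorDefect, hL.skew, map_neg, ← lie_skew]
  abel

theorem anchorDefect_zero_left (hL : IsAnchoredSkewBracket ρ L) (Y : M) :
    anchorDefect ρ L 0 Y = 0 := by
  simp [anchorDefect, hL.zero_left]

theorem anchorDefect_add_left (hL : IsAnchoredSkewBracket ρ L) (X X' Y : M) :
    anchorDefect ρ L (X + X') Y = anchorDefect ρ L X Y + anchorDefect ρ L X' Y := by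
  simp only [anchorDefect, hL.add_left, map_add, add_lie]
  abel

theorem anchorDefect_smul_left (hL : IsAnchoredSkewBracket ρ L) (f : A) (X Y : M) :
    anchorDefect ρ L (f • X) Y = f • anchorDefect ρ L X Y := by
  simp only [anchorDefect, hL.smul_left, map_sub, map_smul, Derivation.smul_lie, smul_sub]
  abel

theorem anchorDefect_eq_zero_of_forall_left (hL : IsAnchoredSkewBracket ρ L) {s : Set M}
    {Y : M} (hY : ∀ a ∈ s, anchorDefect ρ L a Y = 0) {X : M} (hX : X ∈ span A s) :
    anchorDefect ρ L X Y = 0 := by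
  induction hX using Submodule.span_induction with
  | mem a ha => exact hY a ha
  | zero => exact hL.anchorDefect_zero_left Y
  | add X X' _ _ hX hX' => rw [hL.anchorDefect_add_left, hX, hX', add_zero]
  | smul f X _ hX => rw [hL.anchorDefect_smul_left, hX, smul_zero]

theorem anchorDefect_eq_zero_of_mem_span (hL : IsAnchoredSkewBracket ρ L) {s : Set M}
    (hs : ∀ a ∈ s, ∀ b ∈ s, anchorDefect ρ L a b = 0) {X Y : M} (hX : X ∈ span A s)
    (hY : Y ∈ span A s) : anchorDefect ρ L X Y = 0 := by
  refine hL.anchorDefect_eq_zero_of_forall_left (fun a ha => ?_) hX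
  rw [hL.anchorDefect_swap, neg_eq_zero]
  exact hL.anchorDefect_eq_zero_of_forall_left (fun b hb => hs b hb a ha) hY

theorem jacobiator_add_left (hL : IsAnchoredSkewBracket ρ L) (X X' Y Z : M) :
    jacobiator L (X + X') Y Z = jacobiator L X Y Z + jacobiator L X' Y Z := by
  simp only [jacobiator, hL.add_left, hL.add_right]
  abel

theorem jacobiator_zero_left (hL : IsAnchoredSkewBracket ρ L) (Y Z : M) :
    jacobiator L 0 Y Z = 0 := by
  simp [jacobiator, hL.zero_left, hL.zero_right]

theorem jacobiator_smul_left (hL : IsAnchoredSkewBracket ρ L) (f : A) (X Y Z : M) :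
    jacobiator L (f • X) Y Z = f • jacobiator L X Y Z - anchorDefect ρ L Y Z f • X := by
  simp only [jacobiator, anchorDefect, hL.smul_left, hL.leibniz, hL.add_right, hL.neg_right,
    sub_eq_add_neg, Derivation.add_apply, Derivation.neg_apply, Derivation.commutator_apply]
  rw [hL.skew X Y]
  module

theorem jacobiator_eq_zero_of_forall_left (hL : IsAnchoredSkewBracket ρ L) {s : Set M}
    {Y Z : M} (hYZ : anchorDefect ρ L Y Z = 0) (h : ∀ a ∈ s, jacobiator L a Y Z = 0) {X : M}
    (hX : X ∈ span A s) : jacobiator L X Y Z = 0 := by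
  induction hX using Submodule.span_induction with
  | mem a ha => exact h a ha
  | zero => exact hL.jacobiator_zero_left Y Z
  | add X X' _ _ hX hX' => rw [hL.jacobiator_add_left, hX, hX', add_zero]
  | smul f X _ hX => rw [hL.jacobiator_smul_left, hX, hYZ, smul_zero, Derivation.zero_apply,
      zero_smul, sub_zero]

theorem jacobiator_eq_zero_of_mem_span (hL : IsAnchoredSkewBracket ρ L) {s : Set M}
    (hρ : ∀ a ∈ s, ∀ b ∈ s, anchorDefect ρ L a b = 0)
    (hs : ∀ a ∈ s, ∀ b ∈ s, ∀ c ∈ s, jacobiator L a b c = 0) {X Y Z : M} (hX : X ∈ span A s)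
    (hY : Y ∈ span A s) (hZ : Z ∈ span A s) : jacobiator L X Y Z = 0 := by
  have hρ' {X Y : M} (hX : X ∈ span A s) (hY : Y ∈ span A s) : anchorDefect ρ L X Y = 0 :=
    hL.anchorDefect_eq_zero_of_mem_span hρ hX hY
  have h₁ {X : M} (hX : X ∈ span A s) {b c : M} (hb : b ∈ s) (hc : c ∈ s) :
      jacobiator L X b c = 0 :=
    hL.jacobiator_eq_zero_of_forall_left (hρ b hb c hc) (fun a ha => hs a ha b hb c hc) hX
  have h₂ {X Y : M} (hX : X ∈ span A s) (hY : Y ∈ span A s) {c : M} (hc : c ∈ s) :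
      jacobiator L X Y c = 0 := by
    rw [jacobiator_cycle]
    refine hL.jacobiator_eq_zero_of_forall_left (hρ' (subset_span hc) hX) (fun b hb => ?_) hY
    rw [← jacobiator_cycle X b c]
    exact h₁ hX hb hc
  rw [jacobiator_cycle, jacobiator_cycle]
  refine hL.jacobiator_eq_zero_of_forall_left (hρ' hX hY) (fun c hc => ?_) hZ
  rw [← jacobiator_cycle Y c X, ← jacobiator_cycle X Y c]
  exact h₂ hX hY hc

theorem jacobiator_self_left (hL : IsAnchoredSkewBracket ρ L) {X : M} (hX : L X X = 0)
    (Y : M) : jacobiator L X X Y = 0 := by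
  rw [jacobiator, hX, hL.zero_right, hL.skew Y X, hL.neg_right]
  abel

theorem apply_mem_span_pair (hL : IsAnchoredSkewBracket ρ L) {a b : M} (ha : L a a = 0)
    (hb : L b b = 0) (hab : L a b ∈ span A {a, b}) {X Y : M} (hX : X ∈ span A {a, b})
    (hY : Y ∈ span A {a, b}) : L X Y ∈ span A {a, b} := by
  refine hL.apply_mem_span (fun c hc d hd => ?_) hX hY
  rcases hc with rfl | rfl <;> rcases hd with rfl | rfl
  · rw [ha]; exact zero_mem _
  · exact hab
  · rw [hL.skew, neg_mem_iff]; exact hab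
  · rw [hb]; exact zero_mem _

theorem jacobiator_eq_zero_of_mem_span_pair (hL : IsAnchoredSkewBracket ρ L) {a b : M}
    (ha : L a a = 0) (hb : L b b = 0) (hab : anchorDefect ρ L a b = 0) {X Y Z : M}
    (hX : X ∈ span A {a, b}) (hY : Y ∈ span A {a, b}) (hZ : Z ∈ span A {a, b}) :
    jacobiator L X Y Z = 0 := by
  have hself {c : M} (hc : c ∈ ({a, b} : Set M)) : L c c = 0 := by
    rcases hc with rfl | rfl <;> assumption
  refine hL.jacobiator_eq_zero_of_mem_span (fun c hc d hd => ?_) (fun c hc d hd e he => ?_)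
    hX hY hZ
  · rcases hc with rfl | rfl <;> rcases hd with rfl | rfl
    · exact anchorDefect_self ha
    · exact hab
    · rw [hL.anchorDefect_swap, hab, neg_zero]
    · exact anchorDefect_self hb
  · have hrep : c = d ∨ d = e ∨ c = e := by
      rcases hc with rfl | rfl <;> rcases hd with rfl | rfl <;> rcases he with rfl | rfl <;>
        simp
    rcases hrep with rfl | rfl | rfl
    · exact hL.jacobiator_self_left (hself hc) e
    · rw [jacobiator_cycle]
      exact hL.jacobiator_self_left (hself hd) c
    · rw [jacobiator_cycle, jacobiator_cycle]
      exact hL.jacobiator_self_left (hself hc) d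

end IsAnchoredSkewBracket

end AnchoredSkewBracket

theorem pd_apply (v : ℝ × ℝ) (f : S) (p : ℝ × ℝ) :
    (pd v f : ℝ × ℝ → ℝ) p = fderiv ℝ (f : ℝ × ℝ → ℝ) p v := rfl

theorem pd_x₁ (v : ℝ × ℝ) : pd v x₁ = algebraMap ℝ S v.1 := by
  ext p
  simp [pd_apply, x₁, fderiv_fst]

theorem pd_x₂ (v : ℝ × ℝ) : pd v x₂ = algebraMap ℝ S v.2 := by
  ext p
  simp [pd_apply, x₂, fderiv_snd]

theorem pd_comm (v w : ℝ × ℝ) (f : S) : pd v (pd w f) = pd w (pd v f) := by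
  ext p
  have hf : ∀ q, HasFDerivAt (f : ℝ × ℝ → ℝ) (fderiv ℝ (f : ℝ × ℝ → ℝ) q) q := fun q =>
    ((smooth_coe f).differentiable (by simp)).differentiableAt.hasFDerivAt
  have hC : ContDiff ℝ (⊤ : ℕ∞) (fderiv ℝ (f : ℝ × ℝ → ℝ)) :=
    (smooth_coe f).fderiv_right (le_refl _)
  have hf' : DifferentiableAt ℝ (fderiv ℝ (f : ℝ × ℝ → ℝ)) p :=
    (hC.differentiable (by simp)).differentiableAt
  have hpd (u u' : ℝ × ℝ) : (pd u (pd u' f) : ℝ × ℝ → ℝ) p =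
      fderiv ℝ (fderiv ℝ (f : ℝ × ℝ → ℝ)) p u u' := by
    show fderiv ℝ (fun q => fderiv ℝ (f : ℝ × ℝ → ℝ) q u') p u = _
    rw [fderiv_clm_apply hf' (differentiableAt_const u')]
    simp
  rw [hpd, hpd, second_derivative_symmetric hf hf'.hasFDerivAt]

def anchorₗ : E₀ →ₗ[S] Derivation ℝ S S where
  toFun := anchor
  map_add' X Y := by
    simp only [anchor, Matrix.add_apply, add_mul, add_smul, Finset.sum_add_distrib]
  map_smul' f X := by
    simp only [anchor, Matrix.smul_apply, smul_eq_mul, mul_assoc, mul_smul, Finset.smul_sum,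
      RingHom.id_apply]

theorem anchorₗ_𝓐 : anchorₗ 𝓐 = (x₁ ^ 2 + x₂ ^ 2) • pd (ev 0) := by
  show anchor 𝓐 = _
  simp [anchor, Fin.sum_univ_two, 𝓐, sb, xc, add_smul]

theorem anchorₗ_𝓑 : anchorₗ 𝓑 = (x₁ ^ 2 + x₂ ^ 2) • pd (ev 1) := by
  show anchor 𝓑 = _
  simp [anchor, Fin.sum_univ_two, 𝓑, sb, xc, add_smul]

theorem lie_anchorₗ_𝓐_𝓑 :
    ⁅anchorₗ 𝓐, anchorₗ 𝓑⁆ = ((2 : S) * x₁) • anchorₗ 𝓑 - ((2 : S) * x₂) • anchorₗ 𝓐 := by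
  refine Derivation.ext fun f => ?_
  simp only [anchorₗ_𝓐, anchorₗ_𝓑, Derivation.commutator_apply, Derivation.sub_apply,
    Derivation.smul_apply, smul_eq_mul, Derivation.leibniz, map_add, pow_two, pd_x₁, pd_x₂]
  rw [pd_comm (ev 0) (ev 1) f]
  simp only [ev, Fin.isValue, cons_val_one, cons_val_fin_one, cons_val_zero, map_one, mul_one,
    map_zero, mul_zero, add_zero, zero_add, add_sub_add_left_eq_sub]
  ring

namespace IsBracket

variable {L : E₀ → E₀ → E₀}

theorem isAnchoredSkewBracket (hL : IsBracket L) : IsAnchoredSkewBracket anchorₗ L where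
  add_left := hL.1
  skew := hL.2.2.2.2.1
  leibniz := hL.2.2.2.2.2.1

theorem apply_self (hL : IsBracket L) (X : E₀) : L X X = 0 := by
  have h : L X X + L X X = 0 := by
    nth_rw 1 [hL.2.2.2.2.1 X X]
    exact neg_add_cancel _
  calc L X X = (2⁻¹ : ℝ) • (L X X + L X X) := by module
    _ = 0 := by rw [h, smul_zero]

theorem apply_𝓐_𝓑 (hL : IsBracket L) : L 𝓐 𝓑 = ((2 : S) * x₁) • 𝓑 - ((2 : S) * x₂) • 𝓐 := by
  obtain ⟨hal, har, -, -, -, -, hgen⟩ := hL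
  rw [𝓐, 𝓑, hal, har, har, hgen, hgen, hgen, hgen]
  simp only [Fin.isValue, ↓reduceIte, xc, cons_val_zero, cons_val_one, cons_val_fin_one,
    one_ne_zero, zero_ne_one, zero_smul, sub_zero, sub_self, add_zero, zero_sub, smul_add]
  module

theorem anchorDefect_𝓐_𝓑 (hL : IsBracket L) : anchorDefect anchorₗ L 𝓐 𝓑 = 0 := by
  rw [anchorDefect, hL.apply_𝓐_𝓑, map_sub, map_smul, map_smul, lie_anchorₗ_𝓐_𝓑]
  simp

end IsBracket

/-- the `C^∞(ℝ²)`-submodule `E₀''` generated by `𝒜` and `ℬ` is closed under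
`[·,·]_{E₀}` (indeed `[𝒜, ℬ] = 2x¹ℬ − 2x²𝒜`), and the Jacobiator vanishes on all triples
of sections of `E₀''`; so the restricted bracket gives `E₀''` a Lie algebroid structure. -/
theorem statement7 (L : E₀ → E₀ → E₀) (hL : IsBracket L) :
    (∀ X Y : E₀, X ∈ Submodule.span S ({𝓐, 𝓑} : Set E₀) →
      Y ∈ Submodule.span S ({𝓐, 𝓑} : Set E₀) →
      L X Y ∈ Submodule.span S ({𝓐, 𝓑} : Set E₀)) ∧
    (L 𝓐 𝓑 = ((2 : S) * x₁) • 𝓑 - ((2 : S) * x₂) • 𝓐) ∧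
    (∀ X Y Z : E₀, X ∈ Submodule.span S ({𝓐, 𝓑} : Set E₀) →
      Y ∈ Submodule.span S ({𝓐, 𝓑} : Set E₀) →
      Z ∈ Submodule.span S ({𝓐, 𝓑} : Set E₀) →
      Jac L X Y Z = 0) := by
  have hL' := hL.isAnchoredSkewBracket
  have h𝓐𝓑 : L 𝓐 𝓑 ∈ span S ({𝓐, 𝓑} : Set E₀) := by
    rw [hL.apply_𝓐_𝓑]
    exact sub_mem (smul_mem _ _ (subset_span (by simp))) (smul_mem _ _ (subset_span (by simp)))
  refine ⟨fun X Y hX hY => ?_, hL.apply_𝓐_𝓑, fun X Y Z hX hY hZ => ?_⟩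
  · exact hL'.apply_mem_span_pair (hL.apply_self 𝓐) (hL.apply_self 𝓑) h𝓐𝓑 hX hY
  · exact hL'.jacobiator_eq_zero_of_mem_span_pair (hL.apply_self 𝓐) (hL.apply_self 𝓑)
      hL.anchorDefect_𝓐_𝓑 hX hY hZ
end
end
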